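/- arXiv:2404.05709 — 2 statements merged into one kernel-verified Lean document; each statement's English description precedes it below -/
import Mathlib

section
/- There are uncountably many pairwise non-equivalently-embedded closed subsets of [0,1]. Specifically, for each n ∈ ℕ choose aₙ, bₙ with 1/(n+1) < aₙ < bₙ < 1/n, and for A ⊆ ℕ let X_A = {0} ∪ {1/n : n ∈ ℕ, n ≥ 1} ∪ ⋃_{n ∈ A} [aₙ, bₙ]. Then for A ≠ B, the sets X_A and X_B are not equivalently embedded in [0,1]; consequently the family {X_A : A ⊆ ℕ} contains uncountably many pairwise non-equivalent sets. -/
/-- `X` and `Y`, subsets of the unit interval, are *equivalently embedded* if there is an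
order-preserving (strictly increasing) self-homeomorphism of `[0,1]` mapping `X` onto `Y`. -/
def EquivEmbedded (X Y : Set (Set.Icc (0:ℝ) 1)) : Prop :=
  ∃ h : (Set.Icc (0:ℝ) 1) ≃ₜ (Set.Icc (0:ℝ) 1), StrictMono h ∧ h '' X = Y

/-- `X_A = {0} ∪ {1/n : n ≥ 1} ∪ ⋃_{n ∈ A} [aₙ, bₙ]`, viewed as a subset of `[0,1]`. -/
def epgSet (a b : ℕ → ℝ) (A : Set ℕ) : Set (Set.Icc (0:ℝ) 1) :=
  {x | (x : ℝ) = 0 ∨ (∃ n : ℕ, 1 ≤ n ∧ (x : ℝ) = 1 / n) ∨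
    ∃ n ∈ A, (x : ℝ) ∈ Set.Icc (a n) (b n)}

namespace EpgAux

def GapBelow (X : Set (Set.Icc (0:ℝ) 1)) (x : Set.Icc (0:ℝ) 1) : Prop :=
  ∃ y, y < x ∧ ∀ t ∈ X, ¬(y < t ∧ t < x)

def GapAbove (X : Set (Set.Icc (0:ℝ) 1)) (x : Set.Icc (0:ℝ) 1) : Prop :=
  ∃ z, x < z ∧ ∀ t ∈ X, ¬(x < t ∧ t < z)

def Dset (X : Set (Set.Icc (0:ℝ) 1)) : Set (Set.Icc (0:ℝ) 1) :=
  {x | x ∈ X ∧ GapBelow X x ∧ (GapAbove X x ∨ ∀ t ∈ X, t ≤ x)}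

def memR (a b : ℕ → ℝ) (A : Set ℕ) (x : ℝ) : Prop :=
  x = 0 ∨ (∃ n : ℕ, 1 ≤ n ∧ x = 1 / n) ∨ ∃ n ∈ A, x ∈ Set.Icc (a n) (b n)

lemma mem_epg_iff {a b : ℕ → ℝ} {A : Set ℕ} {t : Set.Icc (0:ℝ) 1} :
    t ∈ epgSet a b A ↔ memR a b A (t:ℝ) := Iff.rfl

/-- the special points `1/n` -/
def Spts : Set (Set.Icc (0:ℝ) 1) := {x | ∃ n : ℕ, 1 ≤ n ∧ (x : ℝ) = 1 / n}

section Real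
variable {a b : ℕ → ℝ}
  (hab : ∀ n : ℕ, 1 ≤ n → 1 / ((n : ℝ) + 1) < a n ∧ a n < b n ∧ b n < 1 / (n : ℝ))

include hab

lemma chain {n : ℕ} (hn : 1 ≤ n) :
    0 < 1 / ((n:ℝ) + 1) ∧ 1 / ((n:ℝ) + 1) < a n ∧ a n < b n ∧ b n < 1 / (n:ℝ) ∧
      1 / (n:ℝ) ≤ 1 := by
  obtain ⟨h1, h2, h3⟩ := hab n hn
  have hn' : (1:ℝ) ≤ n := by exact_mod_cast hn
  refine ⟨by positivity, h1, h2, h3, ?_⟩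
  rw [div_le_one (by linarith)]; linarith

omit hab in
lemma recip_not_in_gap {m n : ℕ} (hm : 1 ≤ m) (hn : 1 ≤ n)
    (h1 : 1 / ((n:ℝ) + 1) < 1 / (m:ℝ)) (h2 : (1:ℝ) / m < 1 / n) : False := by
  have e1 : (m:ℝ) < n + 1 := lt_of_one_div_lt_one_div (by positivity) h1
  have e2 : (n:ℝ) < m :=
    lt_of_one_div_lt_one_div (by exact_mod_cast hm : (0:ℝ) < m) h2
  have f1 : n < m := by exact_mod_cast e2
  have f2 : m < n + 1 := by exact_mod_cast e1
  omega

lemma interval_between {m : ℕ} (hm : 1 ≤ m) {x : ℝ} (hx : x ∈ Set.Icc (a m) (b m)) :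
    1 / ((m:ℝ) + 1) < x ∧ x < 1 / (m:ℝ) := by
  obtain ⟨-, h1, h2, h3, -⟩ := chain hab hm
  exact ⟨lt_of_lt_of_le h1 hx.1, lt_of_le_of_lt hx.2 h3⟩

lemma master {A : Set ℕ} (hA : A ⊆ {n | 1 ≤ n}) {n : ℕ} (hn : 1 ≤ n) {x : ℝ}
    (hx : memR a b A x) (h1 : 1 / ((n:ℝ) + 1) < x) (h2 : x < 1 / (n:ℝ)) :
    n ∈ A ∧ x ∈ Set.Icc (a n) (b n) := by
  obtain ⟨hp, -⟩ := chain hab hn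
  rcases hx with h0 | ⟨m, hm, rfl⟩ | ⟨m, hmA, hxm⟩
  · exact absurd (h0 ▸ h1) (by linarith)
  · exact absurd h1 (fun h => recip_not_in_gap hm hn h h2)
  · have hm : 1 ≤ m := hA hmA
    obtain ⟨g1, g2⟩ := interval_between hab hm hxm
    have hmn : m = n := by
      have e1 : (m:ℝ) < n + 1 := lt_of_one_div_lt_one_div (by positivity) (h1.trans g2)
      have e2 : (n:ℝ) < m + 1 := lt_of_one_div_lt_one_div (by positivity) (g1.trans h2)
      have f1 : m < n + 1 := by exact_mod_cast e1
      have f2 : n < m + 1 := by exact_mod_cast e2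
      omega
    exact ⟨hmn ▸ hmA, hmn ▸ hxm⟩

lemma gap_above_interval {A : Set ℕ} (hA : A ⊆ {n | 1 ≤ n}) {n : ℕ} (hn : 1 ≤ n) {x : ℝ}
    (hx : memR a b A x) (h1 : b n < x) (h2 : x < 1 / (n:ℝ)) : False := by
  obtain ⟨-, hc1, hc2, -, -⟩ := chain hab hn
  have := (master hab hA hn hx (by linarith) h2).2.2
  linarith

lemma gap_below_interval {A : Set ℕ} (hA : A ⊆ {n | 1 ≤ n}) {n : ℕ} (hn : 1 ≤ n) {x : ℝ}
    (hx : memR a b A x) (h1 : 1 / ((n:ℝ) + 1) < x) (h2 : x < a n) : False := by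
  obtain ⟨-, -, hc2, hc3, -⟩ := chain hab hn
  have := (master hab hA hn hx h1 (by linarith)).2.1
  linarith

lemma gap_full {A : Set ℕ} (hA : A ⊆ {n | 1 ≤ n}) {n : ℕ} (hn : 1 ≤ n) (hnA : n ∉ A) {x : ℝ}
    (hx : memR a b A x) (h1 : 1 / ((n:ℝ) + 1) < x) (h2 : x < 1 / (n:ℝ)) : False :=
  hnA (master hab hA hn hx h1 h2).1

/-- the endpoints of a `b` lie in `[0,1]` -/
lemma ab_mem {n : ℕ} (hn : 1 ≤ n) :
    a n ∈ Set.Icc (0:ℝ) 1 ∧ b n ∈ Set.Icc (0:ℝ) 1 := by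
  obtain ⟨h0, h1, h2, h3, h4⟩ := chain hab hn
  exact ⟨⟨by linarith, by linarith⟩, ⟨by linarith, by linarith⟩⟩

lemma Dset_epg {A : Set ℕ} (hA : A ⊆ {n | 1 ≤ n}) :
    Dset (epgSet a b A) = Spts := by
  ext x
  constructor
  · rintro ⟨hxX, ⟨y, hy, hyt⟩, hd⟩
    rcases mem_epg_iff.mp hxX with h0 | hS | ⟨m, hmA, hxm⟩
    · exfalso
      have : (y:ℝ) < (x:ℝ) := Subtype.coe_lt_coe.mpr hy
      have h2 := y.2.1
      rw [h0] at this
      linarith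
    · exact hS
    · exfalso
      have hm : 1 ≤ m := hA hmA
      obtain ⟨hc0, hc1, hc2, hc3, hc4⟩ := chain hab hm
      have hx0 : (0:ℝ) ≤ x := x.2.1
      rcases lt_or_eq_of_le hxm.2 with hxb | hxb
      · -- x < b m : no gap above, and not max
        rcases hd with ⟨z, hz, hzt⟩ | hmax
        · have hzc : (x:ℝ) < (z:ℝ) := Subtype.coe_lt_coe.mpr hz
          set r : ℝ := min (z:ℝ) (b m) with hr
          have hxr : (x:ℝ) < r := lt_min hzc hxb
          have hrb : r ≤ b m := min_le_right _ _
          have hrz : r ≤ (z:ℝ) := min_le_left _ _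
          have htIcc : ((x:ℝ) + r)/2 ∈ Set.Icc (0:ℝ) 1 := by
            constructor <;> [linarith; linarith]
          set t : Set.Icc (0:ℝ) 1 := ⟨((x:ℝ) + r)/2, htIcc⟩ with ht
          have htX : t ∈ epgSet a b A := by
            refine Or.inr (Or.inr ⟨m, hmA, ?_, ?_⟩)
            · have := hxm.1; simp only [ht]; linarith
            · simp only [ht]; linarith
          refine hzt t htX ⟨?_, ?_⟩
          · exact Subtype.coe_lt_coe.mp (by simp only [ht]; linarith)
          · exact Subtype.coe_lt_coe.mp (by simp only [ht]; linarith)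
        · have h1X : (⟨1, by norm_num⟩ : Set.Icc (0:ℝ) 1) ∈ epgSet a b A := by
            refine Or.inr (Or.inl ⟨1, le_refl 1, by norm_num⟩)
          have := Subtype.coe_le_coe.mpr (hmax _ h1X)
          simp only at this
          linarith
      · -- x = b m : no gap below
        have hay : a m ≤ (y:ℝ) ∨ (y:ℝ) < a m := le_or_gt _ _
        set r : ℝ := max (y:ℝ) (a m) with hr
        have hyx : (y:ℝ) < (x:ℝ) := Subtype.coe_lt_coe.mpr hy
        have hrb : r < b m := max_lt (by linarith [hxb]) hc2
        have hry : (y:ℝ) ≤ r := le_max_left _ _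
        have hra : a m ≤ r := le_max_right _ _
        have htIcc : (r + b m)/2 ∈ Set.Icc (0:ℝ) 1 := by
          constructor <;> [linarith; linarith]
        set t : Set.Icc (0:ℝ) 1 := ⟨(r + b m)/2, htIcc⟩ with ht
        have htX : t ∈ epgSet a b A := by
          refine Or.inr (Or.inr ⟨m, hmA, ?_, ?_⟩)
          · simp only [ht]; linarith
          · simp only [ht]; linarith
        refine hyt t htX ⟨?_, ?_⟩
        · exact Subtype.coe_lt_coe.mp (by simp only [ht]; linarith)
        · exact Subtype.coe_lt_coe.mp (by simp only [ht]; rw [← hxb]; linarith)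
  · rintro ⟨n, hn, hxn⟩
    obtain ⟨hc0, hc1, hc2, hc3, hc4⟩ := chain hab hn
    refine ⟨Or.inr (Or.inl ⟨n, hn, hxn⟩), ?_, ?_⟩
    · refine ⟨⟨b n, (ab_mem hab hn).2⟩, ?_, ?_⟩
      · exact Subtype.coe_lt_coe.mp (by simp only; rw [hxn]; exact hc3)
      · rintro t htX ⟨l1, l2⟩
        exact gap_above_interval hab hA hn (mem_epg_iff.mp htX)
          (Subtype.coe_lt_coe.mpr l1)
          (hxn ▸ Subtype.coe_lt_coe.mpr l2)
    · obtain ⟨k, rfl⟩ : ∃ k, n = k + 1 := ⟨n - 1, by omega⟩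
      rcases Nat.eq_zero_or_pos k with rfl | hk
      · refine Or.inr (fun t htX => ?_)
        refine Subtype.coe_le_coe.mp ?_
        rw [hxn]
        push_cast
        norm_num
        exact t.2.2
      · obtain ⟨kc0, kc1, kc2, kc3, kc4⟩ := chain hab hk
        refine Or.inl ⟨⟨a k, (ab_mem hab hk).1⟩, ?_, ?_⟩
        · refine Subtype.coe_lt_coe.mp ?_
          simp only
          rw [hxn]
          push_cast
          exact kc1
        · rintro t htX ⟨l1, l2⟩
          refine gap_below_interval hab hA hk (mem_epg_iff.mp htX) ?_
            (Subtype.coe_lt_coe.mpr l2)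
          have := Subtype.coe_lt_coe.mpr l1
          rw [hxn] at this
          push_cast at this
          exact this


/-- the point `1/n` of the interval -/
noncomputable def u (n : ℕ) : Set.Icc (0:ℝ) 1 :=
  ⟨1/(n:ℝ), ⟨by positivity, by
    rcases Nat.eq_zero_or_pos n with h | h
    · simp [h]
    · rw [div_le_one (by exact_mod_cast h)]
      exact_mod_cast h⟩⟩

omit hab in
lemma u_mem_Spts {n : ℕ} (hn : 1 ≤ n) : u n ∈ Spts := ⟨n, hn, rfl⟩

omit hab in
lemma u_inj {m n : ℕ} (hm : 1 ≤ m) (hn : 1 ≤ n) (h : u m = u n) : m = n := by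
  have h' : 1/(m:ℝ) = 1/(n:ℝ) := congrArg Subtype.val h
  have hm' : (0:ℝ) < m := by exact_mod_cast hm
  have hn' : (0:ℝ) < n := by exact_mod_cast hn
  field_simp at h'
  exact_mod_cast h'.symm

omit hab in
lemma Dset_map (e : Set.Icc (0:ℝ) 1 ≃o Set.Icc (0:ℝ) 1) {X Y : Set (Set.Icc (0:ℝ) 1)}
    (himg : ⇑e '' X = Y) {x : Set.Icc (0:ℝ) 1} (hx : x ∈ Dset X) : e x ∈ Dset Y := by
  obtain ⟨hxX, ⟨y, hy, hyt⟩, hd⟩ := hx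
  have hmem : ∀ t, t ∈ Y → ∃ s ∈ X, e s = t := by
    intro t ht
    rw [← himg] at ht
    exact ht
  refine ⟨himg ▸ Set.mem_image_of_mem _ hxX, ?_, ?_⟩
  · refine ⟨e y, e.strictMono hy, ?_⟩
    rintro t htY ⟨l1, l2⟩
    obtain ⟨s, hsX, rfl⟩ := hmem t htY
    exact hyt s hsX ⟨e.lt_iff_lt.mp l1, e.lt_iff_lt.mp l2⟩
  · rcases hd with ⟨z, hz, hzt⟩ | hmax
    · refine Or.inl ⟨e z, e.strictMono hz, ?_⟩
      rintro t htY ⟨l1, l2⟩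
      obtain ⟨s, hsX, rfl⟩ := hmem t htY
      exact hzt s hsX ⟨e.lt_iff_lt.mp l1, e.lt_iff_lt.mp l2⟩
    · refine Or.inr fun t htY => ?_
      obtain ⟨s, hsX, rfl⟩ := hmem t htY
      exact e.monotone (hmax s hsX)

omit hab in
lemma fixL (e : Set.Icc (0:ℝ) 1 ≃o Set.Icc (0:ℝ) 1) (hS : ∀ x ∈ Spts, e x ∈ Spts)
    {n : ℕ} (hn : 1 ≤ n) (IH : ∀ k, 1 ≤ k → k < n → e (u k) = u k) : e (u n) ≤ u n := by
  obtain ⟨m, hm, hval⟩ := hS _ (u_mem_Spts hn)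
  have hEq : e (u n) = u m := Subtype.ext hval
  have hnm : n ≤ m := by
    by_contra hcon
    push_neg at hcon
    have h1 : e (u m) = u m := IH m hm hcon
    have h2 : u n = u m := e.injective (hEq.trans h1.symm)
    exact absurd (u_inj hn hm h2) (by omega)
  rw [hEq]
  refine Subtype.coe_le_coe.mp ?_
  show 1/(m:ℝ) ≤ 1/(n:ℝ)
  exact one_div_le_one_div_of_le (by exact_mod_cast hn) (by exact_mod_cast hnm)

omit hab in
lemma fix (e : Set.Icc (0:ℝ) 1 ≃o Set.Icc (0:ℝ) 1) (hS : ∀ x ∈ Spts, e x ∈ Spts)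
    (hS' : ∀ x ∈ Spts, e.symm x ∈ Spts) : ∀ n : ℕ, 1 ≤ n → e (u n) = u n := by
  intro n
  induction n using Nat.strong_induction_on with
  | _ n IH =>
    intro hn
    have IH1 : ∀ k, 1 ≤ k → k < n → e (u k) = u k := fun k hk1 hk2 => IH k hk2 hk1
    have h1 := fixL e hS hn IH1
    have IH2 : ∀ k, 1 ≤ k → k < n → e.symm (u k) = u k := by
      intro k hk1 hk2
      have h := congrArg e.symm (IH1 k hk1 hk2)
      simpa using h.symm
    have h2 := fixL e.symm hS' hn IH2
    have h3 : u n ≤ e (u n) := by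
      have := e.monotone h2
      simpa using this
    exact le_antisymm h1 h3

lemma mem_of_iso {A B : Set ℕ} (hA : A ⊆ {n | 1 ≤ n}) (hB : B ⊆ {n | 1 ≤ n})
    (e : Set.Icc (0:ℝ) 1 ≃o Set.Icc (0:ℝ) 1)
    (himg : ⇑e '' epgSet a b A = epgSet a b B)
    (himg' : ⇑e.symm '' epgSet a b B = epgSet a b A)
    {n : ℕ} (hnA : n ∈ A) : n ∈ B := by
  have hn : 1 ≤ n := hA hnA
  obtain ⟨hc0, hc1, hc2, hc3, hc4⟩ := chain hab hn
  have hDA := Dset_epg hab hA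
  have hDB := Dset_epg hab hB
  have hS : ∀ x ∈ Spts, e x ∈ Spts := by
    intro x hx
    rw [← hDA] at hx
    have := Dset_map e himg hx
    rwa [hDB] at this
  have hS' : ∀ x ∈ Spts, e.symm x ∈ Spts := by
    intro x hx
    rw [← hDB] at hx
    have := Dset_map e.symm himg' hx
    rwa [hDA] at this
  have hfix := fix e hS hS'
  set x : Set.Icc (0:ℝ) 1 := ⟨a n, (ab_mem hab hn).1⟩ with hx
  have hxA : x ∈ epgSet a b A :=
    Or.inr (Or.inr ⟨n, hnA, le_refl _, le_of_lt hc2⟩)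
  have hex : e x ∈ epgSet a b B := himg ▸ Set.mem_image_of_mem _ hxA
  have hlow : u (n+1) < x := by
    refine Subtype.coe_lt_coe.mp ?_
    show 1/((n+1:ℕ):ℝ) < a n
    push_cast
    exact hc1
  have hhigh : x < u n := by
    refine Subtype.coe_lt_coe.mp ?_
    show a n < 1/(n:ℝ)
    linarith
  have e1 : u (n+1) < e x := by
    have := e.strictMono hlow
    rwa [hfix (n+1) (by omega)] at this
  have e2 : e x < u n := by
    have := e.strictMono hhigh
    rwa [hfix n hn] at this
  have c1 : 1/((n:ℝ)+1) < ((e x : Set.Icc (0:ℝ) 1) : ℝ) := by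
    have := Subtype.coe_lt_coe.mpr e1
    show _ < ((e x : Set.Icc (0:ℝ) 1) : ℝ)
    calc 1/((n:ℝ)+1) = 1/(((n+1:ℕ)):ℝ) := by push_cast; ring_nf
    _ < _ := this
  have c2 : ((e x : Set.Icc (0:ℝ) 1) : ℝ) < 1/(n:ℝ) := Subtype.coe_lt_coe.mpr e2
  by_contra hnB
  exact gap_full hab hB hn hnB (mem_epg_iff.mp hex) c1 c2

end Real
end EpgAux

/-- For `1/(n+1) < aₙ < bₙ < 1/n`, the sets `X_A` for distinct `A ⊆ {1,2,3,...}` are pairwise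
non-equivalently embedded in `[0,1]`; consequently the family `{X_A}` is uncountable. -/
theorem epgSets_pairwise_inequivalent_and_uncountable (a b : ℕ → ℝ)
    (hab : ∀ n : ℕ, 1 ≤ n → 1 / ((n : ℝ) + 1) < a n ∧ a n < b n ∧ b n < 1 / (n : ℝ)) :
    (∀ A B : Set ℕ, A ⊆ {n | 1 ≤ n} → B ⊆ {n | 1 ≤ n} → A ≠ B →
      ¬ EquivEmbedded (epgSet a b A) (epgSet a b B)) ∧
    ¬ ({S | ∃ A ⊆ {n : ℕ | 1 ≤ n}, S = epgSet a b A}).Countable := by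
  have part1 : ∀ A B : Set ℕ, A ⊆ {n | 1 ≤ n} → B ⊆ {n | 1 ≤ n} → A ≠ B →
      ¬ EquivEmbedded (epgSet a b A) (epgSet a b B) := by
    rintro A B hA hB hne ⟨h, hmono, himg⟩
    apply hne
    set e : Set.Icc (0:ℝ) 1 ≃o Set.Icc (0:ℝ) 1 :=
      { toEquiv := h.toEquiv, map_rel_iff' := @fun x y => hmono.le_iff_le } with he
    have himg1 : ⇑e '' epgSet a b A = epgSet a b B := himg
    have himg2 : ⇑e.symm '' epgSet a b B = epgSet a b A := by
      rw [← himg1]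
      exact Equiv.symm_image_image e.toEquiv _
    ext n
    constructor
    · intro hn
      exact EpgAux.mem_of_iso hab hA hB e himg1 himg2 hn
    · intro hn
      refine EpgAux.mem_of_iso hab hB hA e.symm himg2 ?_ hn
      simpa using himg1
  refine ⟨part1, ?_⟩
  intro hcnt
  have hss : ∀ C : Set ℕ, Nat.succ '' C ⊆ {n : ℕ | 1 ≤ n} := by
    rintro C n ⟨m, -, rfl⟩
    exact Nat.succ_le_succ (Nat.zero_le m)
  set f : Set ℕ → Set (Set.Icc (0:ℝ) 1) := fun C => epgSet a b (Nat.succ '' C) with hf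
  have hfr : ∀ C, f C ∈ {S | ∃ A ⊆ {n : ℕ | 1 ≤ n}, S = epgSet a b A} :=
    fun C => ⟨Nat.succ '' C, hss C, rfl⟩
  have hfinj : Function.Injective f := by
    intro C D hCD
    have hAB : Nat.succ '' C = Nat.succ '' D := by
      by_contra hne
      refine part1 _ _ (hss C) (hss D) hne ⟨Homeomorph.refl _, fun x y h => h, ?_⟩
      simp only [hf] at hCD
      rw [← hCD]
      simp [Homeomorph.refl]
    exact (Set.image_injective.mpr Nat.succ_injective) hAB
  have h1 := hcnt.to_subtype
  have h2 : Countable (Set ℕ) :=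
    Function.Injective.countable
      (f := fun C => (⟨f C, hfr C⟩ : {S | ∃ A ⊆ {n : ℕ | 1 ≤ n}, S = epgSet a b A}))
      (fun C D h => hfinj (congrArg Subtype.val h))
  obtain ⟨g, hg⟩ := (countable_iff_exists_injective (Set ℕ)).mp h2
  exact Function.cantor_injective g hg
end

section
/- If F is an endpoint-homogeneous fan, then F is X-endpoint-generated for some X ⊆ [0,1]: there exists X ⊆ [0,1] such that for every blade B of F there is a homeomorphism φ : [0,1] → B with φ(0) = t and φ[X] = B ∩ closure(E(F) \ B), where E(F) is the set of endpoints of F and t is the top. -/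
open Set

/-- A subset of a topological space is an *arc* if it is homeomorphic to `[0,1]`. -/
def IsArc {F : Type*} [TopologicalSpace F] (A : Set F) : Prop :=
  Nonempty (A ≃ₜ (Set.Icc (0:ℝ) 1))

/-- `e` is an endpoint of the arc `A`: removing it leaves a connected set. -/
def IsArcEndpoint {F : Type*} [TopologicalSpace F] (A : Set F) (e : F) : Prop :=
  e ∈ A ∧ IsPreconnected (A \ {e})

/-- A subcontinuum: a nonempty compact connected subset. -/
def IsSubcontinuum {F : Type*} [TopologicalSpace F] (S : Set F) : Prop :=
  IsCompact S ∧ IsConnected S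

/-- A *continuum* is a nonempty compact connected metrizable space. -/
def IsContinuum (F : Type*) [TopologicalSpace F] : Prop :=
  Nonempty F ∧ CompactSpace F ∧ ConnectedSpace F ∧ TopologicalSpace.MetrizableSpace F

/-- A *dendroid* is an arcwise connected, hereditarily unicoherent continuum. -/
def IsDendroid (F : Type*) [TopologicalSpace F] : Prop :=
  IsContinuum F ∧
  (∀ x y : F, x ≠ y → ∃ A : Set F, IsArc A ∧ IsArcEndpoint A x ∧ IsArcEndpoint A y) ∧
  (∀ X A B : Set F, IsSubcontinuum X → IsSubcontinuum A → IsSubcontinuum B →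
    A ∪ B = X → IsConnected (A ∩ B))

/-- The standard simple triod in the plane: `([-1,1] × {0}) ∪ ({0} × [0,1])`. -/
def stdTriod : Set (ℝ × ℝ) :=
  (Set.Icc (-1:ℝ) 1) ×ˢ ({0} : Set ℝ) ∪ ({0} : Set ℝ) ×ˢ Set.Icc (0:ℝ) 1

/-- `S` has exactly three connected components. -/
def HasThreeComponents {F : Type*} [TopologicalSpace F] (S : Set F) : Prop :=
  ∃ C : Fin 3 → Set F, Function.Injective C ∧
    (∀ i, ∃ y ∈ S, C i = connectedComponentIn S y) ∧
    (∀ y ∈ S, ∃ i, connectedComponentIn S y = C i)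

/-- `x` is a *ramification point*: the top of some simple triod contained in the space. -/
def IsRamificationPoint {F : Type*} [TopologicalSpace F] (x : F) : Prop :=
  ∃ T : Set F, Nonempty (T ≃ₜ stdTriod) ∧ x ∈ T ∧ HasThreeComponents (T \ {x})

/-- A *fan* is a dendroid with exactly one ramification point `t`, its top. -/
def IsFan (F : Type*) [TopologicalSpace F] (t : F) : Prop :=
  IsDendroid F ∧ IsRamificationPoint t ∧ ∀ x : F, IsRamificationPoint x → x = t

/-- The endpoints of a dendroid: points that are endpoints of every arc containing them. -/
def Endpoints (F : Type*) [TopologicalSpace F] : Set F :=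
  {x | ∀ A : Set F, IsArc A → x ∈ A → IsPreconnected (A \ {x})}

/-- A *blade* of a fan with top `t`: the arc from `t` to an endpoint. -/
def IsBlade {F : Type*} [TopologicalSpace F] (t : F) (B : Set F) : Prop :=
  ∃ e ∈ Endpoints F, IsArc B ∧ IsArcEndpoint B t ∧ IsArcEndpoint B e

/-- A fan is *endpoint-homogeneous* if its homeomorphism group acts transitively on its
endpoints. -/
def EndpointHomogeneous (F : Type*) [TopologicalSpace F] : Prop :=
  ∀ e ∈ Endpoints F, ∀ e' ∈ Endpoints F, ∃ h : F ≃ₜ F, h e = e'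

/-- `F` (a fan with top `t`) is *X-endpoint-generated*: for every blade `B` there is a
homeomorphism `φ : [0,1] → B` with `φ(0) = t` and `φ[X] = B ∩ closure(E(F) \ B)`. -/
def IsXEPG {F : Type*} [TopologicalSpace F] (t : F) (X : Set ℝ) : Prop :=
  ∀ B : Set F, IsBlade t B → ∃ φ : (Set.Icc (0:ℝ) 1) ≃ₜ B,
    ((φ ⟨0, by norm_num⟩ : B) : F) = t ∧
    Subtype.val '' (φ '' {x : Set.Icc (0:ℝ) 1 | (x : ℝ) ∈ X}) =
      B ∩ closure (Endpoints F \ B)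

/-!
Fix an endpoint `e₀ ≠ t`, the blade `B₀ = [t, e₀]`, a parametrization `φ₀ : [0,1] → B₀` starting
at `t`, and let `X = φ₀⁻¹(closure (E(F) \ B₀))`. Given any blade `B = [t, e]`, take a homeomorphism
`h` of `F` with `h e₀ = e`. It fixes `t`, the only ramification point, and preserves `E(F)`; by
hereditary unicoherence `B` is the only arc from `t` to `e`, so `h '' B₀ = B` and `h ∘ φ₀` is the
required parametrization of `B`. If every endpoint is `t`, then `E(F) \ B = ∅` for every blade
and `X = ∅` works.
-/

open Set Topology unitInterval

section Arcs

variable {F G : Type*} [TopologicalSpace F] [TopologicalSpace G] {A B S : Set F} {x y : F}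

lemma Homeomorph.range_val_comp (φ : G ≃ₜ A) : range (Subtype.val ∘ φ) = A := by
  rw [range_comp, φ.range_coe, image_univ, Subtype.range_coe]

lemma Homeomorph.isPreconnected_preimage_val_comp_iff (φ : G ≃ₜ A) (hS : S ⊆ A) :
    IsPreconnected ((Subtype.val ∘ φ) ⁻¹' S) ↔ IsPreconnected S := by
  rw [← (IsEmbedding.subtypeVal.comp φ.isEmbedding).isInducing.isPreconnected_image,
    image_preimage_eq_of_subset (by rwa [φ.range_val_comp])]

lemma Homeomorph.image_val_comp_preimage (φ : G ≃ₜ A) (K : Set F) :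
    Subtype.val '' (φ '' ((Subtype.val ∘ φ) ⁻¹' K)) = A ∩ K := by
  rw [image_image, ← Function.comp_def, image_preimage_eq_inter_range, φ.range_val_comp,
    inter_comm]

lemma IsArcEndpoint.eq_zero_or_eq_one (φ : I ≃ₜ A) {c : I} (hc : IsArcEndpoint A (φ c)) :
    c = 0 ∨ c = 1 := by
  have hpre : (Subtype.val ∘ φ) ⁻¹' (A \ {(φ c : F)}) = {c}ᶜ := by
    ext u
    simp [Subtype.val_injective.eq_iff, φ.injective.eq_iff]
  have hconn : IsPreconnected ({c}ᶜ : Set I) := by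
    rw [← hpre, φ.isPreconnected_preimage_val_comp_iff sdiff_subset]
    exact hc.2
  by_contra! h
  exact hconn.Icc_subset h.1.symm h.2.symm ⟨nonneg', le_one'⟩ rfl

lemma IsArc.exists_homeomorph_apply_zero (hA : IsArc A) (hx : IsArcEndpoint A x) :
    ∃ φ : I ≃ₜ A, (φ 0 : F) = x := by
  obtain ⟨ψ⟩ := hA
  have hc : IsArcEndpoint A (ψ.symm (ψ ⟨x, hx.1⟩)) := by rwa [ψ.symm_apply_apply]
  rcases hc.eq_zero_or_eq_one ψ.symm with h0 | h1
  · exact ⟨ψ.symm, by rw [← h0, ψ.symm_apply_apply]⟩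
  · exact ⟨symmHomeomorph.trans ψ.symm, by
      simp only [Homeomorph.trans_apply, symmHomeomorph_apply, symm_zero, ← h1,
        ψ.symm_apply_apply]⟩

lemma IsArc.exists_homeomorph_apply_zero_apply_one (hA : IsArc A) (hxy : x ≠ y)
    (hx : IsArcEndpoint A x) (hy : IsArcEndpoint A y) :
    ∃ φ : I ≃ₜ A, (φ 0 : F) = x ∧ (φ 1 : F) = y := by
  obtain ⟨φ, hφ⟩ := hA.exists_homeomorph_apply_zero hx
  have hc : (φ (φ.symm ⟨y, hy.1⟩) : F) = y := by rw [φ.apply_symm_apply]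
  rcases (hc ▸ hy).eq_zero_or_eq_one φ with h | h
  · exact absurd (hφ.symm.trans (h ▸ hc)) hxy
  · exact ⟨φ, hφ, h ▸ hc⟩

lemma IsArc.eq_of_isPreconnected (hA : IsArc A) (hxy : x ≠ y) (hx : IsArcEndpoint A x)
    (hy : IsArcEndpoint A y) (hSA : S ⊆ A) (hS : IsPreconnected S) (hxS : x ∈ S)
    (hyS : y ∈ S) : S = A := by
  obtain ⟨φ, hφ0, hφ1⟩ := hA.exists_homeomorph_apply_zero_apply_one hxy hx hy
  have hT := (φ.isPreconnected_preimage_val_comp_iff hSA).2 hS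
  refine hSA.antisymm (φ.range_val_comp ▸ range_subset_iff.2 fun u => ?_)
  exact hT.Icc_subset (a := 0) (b := 1) (by simpa [hφ0]) (by simpa [hφ1]) ⟨nonneg', le_one'⟩

lemma IsArc.isSubcontinuum (hA : IsArc A) : IsSubcontinuum A := by
  obtain ⟨ψ⟩ := hA
  rw [← ψ.symm.range_val_comp]
  exact ⟨isCompact_range (by fun_prop), isConnected_range (by fun_prop)⟩

lemma IsDendroid.eq_of_isArc (hF : IsDendroid F) (hxy : x ≠ y)
    (hA : IsArc A) (hAx : IsArcEndpoint A x) (hAy : IsArcEndpoint A y)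
    (hB : IsArc B) (hBx : IsArcEndpoint B x) (hBy : IsArcEndpoint B y) : A = B := by
  -- hereditary unicoherence, applied to the subcontinuum `A ∪ B`
  have hAB : IsConnected (A ∩ B) :=
    hF.2.2 _ A B ⟨hA.isSubcontinuum.1.union hB.isSubcontinuum.1,
      hA.isSubcontinuum.2.union ⟨x, hAx.1, hBx.1⟩ hB.isSubcontinuum.2⟩
      hA.isSubcontinuum hB.isSubcontinuum rfl
  calc A = A ∩ B := (hA.eq_of_isPreconnected hxy hAx hAy inter_subset_left
        hAB.isPreconnected ⟨hAx.1, hBx.1⟩ ⟨hAy.1, hBy.1⟩).symm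
    _ = B := hB.eq_of_isPreconnected hxy hBx hBy inter_subset_right
        hAB.isPreconnected ⟨hAx.1, hBx.1⟩ ⟨hAy.1, hBy.1⟩

end Arcs

section Homeomorph

variable {F G : Type*} [TopologicalSpace F] [TopologicalSpace G] (h : F ≃ₜ G)

lemma IsArc.image {A : Set F} (hA : IsArc A) : IsArc (h '' A) :=
  let ⟨ψ⟩ := hA
  ⟨(h.image A).symm.trans ψ⟩

lemma IsArcEndpoint.image {A : Set F} {e : F} (he : IsArcEndpoint A e) :
    IsArcEndpoint (h '' A) (h e) := by
  refine ⟨mem_image_of_mem _ he.1, ?_⟩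
  rw [← image_singleton, ← image_sdiff h.injective, h.isPreconnected_image]
  exact he.2

lemma Homeomorph.apply_mem_endpoints {x : F} (hx : x ∈ Endpoints F) : h x ∈ Endpoints G := by
  intro A hA hxA
  have hpre := hx _ (hA.image h.symm) ⟨h x, hxA, h.symm_apply_apply x⟩
  rwa [← h.isPreconnected_image, image_sdiff h.injective, image_singleton,
    h.image_symm, image_preimage_eq _ h.surjective] at hpre

lemma Homeomorph.image_endpoints : h '' Endpoints F = Endpoints G :=
  (image_subset_iff.2 fun _ => h.apply_mem_endpoints).antisymm
    fun y hy => ⟨h.symm y, h.symm.apply_mem_endpoints hy, h.apply_symm_apply y⟩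

lemma Homeomorph.image_inter_closure_endpoints_diff (B : Set F) :
    h '' (B ∩ closure (Endpoints F \ B)) = h '' B ∩ closure (Endpoints G \ h '' B) := by
  rw [image_inter h.injective, h.image_closure, image_sdiff h.injective, h.image_endpoints]

lemma HasThreeComponents.image {S : Set F} (hS : HasThreeComponents S) :
    HasThreeComponents (h '' S) := by
  obtain ⟨C, hinj, hw, hsurj⟩ := hS
  refine ⟨fun i => h '' C i, (image_injective.2 h.injective).comp hinj, fun i => ?_,
    fun y hy => ?_⟩
  · obtain ⟨y, hyS, hCi⟩ := hw i
    exact ⟨h y, mem_image_of_mem _ hyS, by dsimp only; rw [hCi, h.image_connectedComponentIn hyS]⟩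
  · obtain ⟨z, hz, rfl⟩ := hy
    obtain ⟨i, hi⟩ := hsurj z hz
    exact ⟨i, by rw [← h.image_connectedComponentIn hz, hi]⟩

lemma IsRamificationPoint.image {x : F} (hx : IsRamificationPoint x) :
    IsRamificationPoint (h x) := by
  obtain ⟨T, ⟨g⟩, hxT, h3⟩ := hx
  refine ⟨h '' T, ⟨(h.image T).symm.trans g⟩, mem_image_of_mem _ hxT, ?_⟩
  rw [← image_singleton, ← image_sdiff h.injective]
  exact h3.image h

end Homeomorph

section Fan

variable {F : Type*} [TopologicalSpace F] {t e : F} {A B : Set F}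

lemma IsFan.apply_top (hF : IsFan F t) (h : F ≃ₜ F) : h t = t :=
  hF.2.2 _ (hF.2.1.image h)

lemma IsFan.image_eq_of_isArc (hF : IsFan F t) (h : F ≃ₜ F) (hte : t ≠ e)
    (hA : IsArc A) (hAt : IsArcEndpoint A t) (hAe : IsArcEndpoint A e)
    (hB : IsArc B) (hBt : IsArcEndpoint B t) (hBe : IsArcEndpoint B (h e)) : h '' A = B := by
  have hAt' := hAt.image h
  rw [hF.apply_top h] at hAt'
  exact hF.1.eq_of_isArc (hF.apply_top h ▸ h.injective.ne hte) (hA.image h) hAt'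
    (hAe.image h) hB hBt hBe

end Fan

/-- Every endpoint-homogeneous fan is `X`-endpoint-generated for some `X ⊆ [0,1]`. -/
theorem endpointHomogeneous_isXEPG
    (F : Type*) [TopologicalSpace F] (t : F) (hF : IsFan F t)
    (hhom : EndpointHomogeneous F) :
    ∃ X : Set ℝ, X ⊆ Set.Icc 0 1 ∧ IsXEPG t X := by
  by_cases hE : ∃ e₀ ∈ Endpoints F, e₀ ≠ t
  · obtain ⟨e₀, he₀, he₀t⟩ := hE
    obtain ⟨B₀, hB₀, hB₀t, hB₀e₀⟩ := hF.1.2.1 t e₀ he₀t.symm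
    obtain ⟨φ₀, hφ₀⟩ := hB₀.exists_homeomorph_apply_zero hB₀t
    set K₀ := closure (Endpoints F \ B₀)
    set X := Subtype.val '' ((Subtype.val ∘ φ₀) ⁻¹' K₀)
    have hX : {x : I | (x : ℝ) ∈ X} = (Subtype.val ∘ φ₀) ⁻¹' K₀ :=
      Subtype.val_injective.preimage_image _
    refine ⟨X, image_subset_iff.2 fun u _ => u.2, fun B ⟨e, he, hB, hBt, hBe⟩ => ?_⟩
    obtain ⟨h, rfl⟩ := hhom e₀ he₀ e he
    obtain rfl := hF.image_eq_of_isArc h he₀t.symm hB₀ hB₀t hB₀e₀ hB hBt hBe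
    refine ⟨φ₀.trans (h.image B₀), by simp [hφ₀, hF.apply_top h], ?_⟩
    rw [hX, ← h.image_inter_closure_endpoints_diff, ← φ₀.image_val_comp_preimage K₀]
    simp only [image_image]
    rfl
  · push Not at hE
    refine ⟨∅, empty_subset _, fun B ⟨e, _, hB, hBt, _⟩ => ?_⟩
    obtain ⟨φ, hφ⟩ := hB.exists_homeomorph_apply_zero hBt
    have hEB : Endpoints F \ B = ∅ := sdiff_eq_empty.2 fun e he => hE e he ▸ hBt.1
    exact ⟨φ, hφ, by simp [hEB]⟩
end
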